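/- arXiv:1511.02017 — 5 statements merged into one kernel-verified Lean document; each statement's English description precedes it below -/
import Mathlib

section
/- If x : [a,b] → ℝ is continuously differentiable and α : [a,b] → (0,1) is differentiable, then for t ∈ (a,b), ᶜₐD_t^{α(t)} x(t) = ᶜₐ𝒟_t^{α(t)} x(t) − (α'(t) Ψ(1-α(t))/Γ(1-α(t))) ∫_a^t (t-τ)^{-α(t)} [x(τ)-x(a)] dτ, where Ψ is the digamma function. -/
/-!
With `y = x - x a`, the substitution `τ = a + (s - a) v` writes the fractional integral as
`(s - a) ^ (1 - α s) * K (α s, s)`, where `K (β, s) = ∫₀¹ (1 - v) ^ (-β) y (a + (s - a) v) dv`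
has a kernel that no longer moves with `s`. For `β` near `β₀ < 1` the `(β, s)`-derivative of
this integrand is dominated by a multiple of the integrable `(1 - v) ^ (-(1 - δ))`: the
`β`-derivative only costs a factor `|log (1 - v)| ≤ (1 - v) ^ (-δ) / δ`. Hence `K` is jointly
differentiable, the fractional integral is differentiable at `t`, and the identity is the product
rule together with `d/ds (1 / Γ (1 - α s)) = α' ψ(1 - α s) / Γ (1 - α s)`.
-/

open Real intervalIntegral Set

noncomputable def psi (t : ℝ) : ℝ := deriv (fun s => Real.log (Real.Gamma s)) t

open MeasureTheory
open scoped Interval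

theorem psi_eq_deriv_Gamma_div_Gamma {s : ℝ} (hs : ∀ m : ℕ, s ≠ -m) :
    psi s = deriv Gamma s / Gamma s :=
  ((differentiableAt_Gamma hs).hasDerivAt.log (Gamma_ne_zero hs)).deriv

theorem HasDerivAt.one_div_Gamma {u : ℝ → ℝ} {u' t : ℝ} (hu : HasDerivAt u u' t)
    (hut : ∀ m : ℕ, u t ≠ -m) :
    HasDerivAt (fun s => 1 / Gamma (u s)) (-u' * psi (u t) / Gamma (u t)) t := by
  have hΓ := ((differentiableAt_Gamma hut).hasDerivAt.comp t hu).inv (Gamma_ne_zero hut)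
  simp only [one_div]
  refine hΓ.congr_deriv ?_
  rw [psi_eq_deriv_Gamma_div_Gamma hut, Function.comp_apply]
  field_simp

theorem abs_log_le_rpow_neg_div {u δ : ℝ} (hu : 0 ≤ u) (hu1 : u ≤ 1) (hδ : 0 < δ) :
    |log u| ≤ u ^ (-δ) / δ := by
  rw [abs_of_nonpos (log_nonpos hu hu1), ← log_inv, rpow_neg hu, ← inv_rpow hu]
  exact log_le_rpow_div (inv_nonneg.2 hu) hδ

theorem rpow_neg_mul_abs_log_le {u β δ : ℝ} (hu : 0 < u) (hu1 : u ≤ 1) (hδ : 0 < δ) :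
    u ^ (-β) * |log u| ≤ u ^ (-(β + δ)) / δ :=
  calc u ^ (-β) * |log u| ≤ u ^ (-β) * (u ^ (-δ) / δ) :=
        mul_le_mul_of_nonneg_left (abs_log_le_rpow_neg_div hu.le hu1 hδ) (rpow_nonneg hu.le _)
    _ = u ^ (-(β + δ)) / δ := by rw [neg_add, rpow_add hu]; ring

theorem norm_smul_fst_add_smul_snd_le (c d : ℝ) :
    ‖c • ContinuousLinearMap.fst ℝ ℝ ℝ + d • ContinuousLinearMap.snd ℝ ℝ ℝ‖ ≤ |c| + |d| := by
  refine (norm_add_le _ _).trans (add_le_add ?_ ?_) <;> rw [norm_smul, Real.norm_eq_abs]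
  · exact mul_le_of_le_one_right (abs_nonneg c) (ContinuousLinearMap.norm_fst_le ℝ ℝ ℝ)
  · exact mul_le_of_le_one_right (abs_nonneg d) (ContinuousLinearMap.norm_snd_le ℝ ℝ ℝ)

theorem norm_rpow_neg_smul_fst_add_snd_le {u β γ δ c d Y Y' : ℝ} (hu : 0 < u) (hu1 : u ≤ 1)
    (hδ : 0 < δ) (hβγ : β + δ ≤ γ) (hc : |c| ≤ Y) (hd : |d| ≤ Y') :
    ‖u ^ (-β) • ((-log u * c) • ContinuousLinearMap.fst ℝ ℝ ℝ +
      d • ContinuousLinearMap.snd ℝ ℝ ℝ)‖ ≤ (Y / δ + Y') * u ^ (-γ) := by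
  have hpow_le : ∀ {e}, e ≤ γ → u ^ (-e) ≤ u ^ (-γ) := fun he =>
    rpow_le_rpow_of_exponent_ge hu hu1 (neg_le_neg he)
  have hY : 0 ≤ Y := (abs_nonneg c).trans hc
  have hY' : 0 ≤ Y' := (abs_nonneg d).trans hd
  calc _ ≤ u ^ (-β) * (|log u| * Y + Y') := by
        rw [norm_smul, Real.norm_of_nonneg (rpow_nonneg hu.le _)]
        refine mul_le_mul_of_nonneg_left ((norm_smul_fst_add_smul_snd_le _ _).trans ?_)
          (rpow_nonneg hu.le _)
        rw [abs_mul, abs_neg]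
        gcongr
    _ = u ^ (-β) * |log u| * Y + u ^ (-β) * Y' := by ring
    _ ≤ u ^ (-(β + δ)) / δ * Y + u ^ (-γ) * Y' :=
        add_le_add (mul_le_mul_of_nonneg_right (rpow_neg_mul_abs_log_le hu hu1 hδ) hY)
          (mul_le_mul_of_nonneg_right (hpow_le (by linarith)) hY')
    _ ≤ u ^ (-γ) / δ * Y + u ^ (-γ) * Y' := by
        gcongr ?_ / δ * Y + _
        exact hpow_le hβγ
    _ = (Y / δ + Y') * u ^ (-γ) := by ring

theorem ae_restrict_uIoc_mem_Ioo {a b : ℝ} (hab : a ≤ b) :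
    ∀ᵐ v ∂volume.restrict (Ι a b), v ∈ Ioo a b := by
  rw [uIoc_of_le hab, ← Measure.restrict_congr_set Ioo_ae_eq_Ioc]
  exact ae_restrict_mem measurableSet_Ioo

theorem ContinuousOn.aestronglyMeasurable_uIoc_of_Ioo {E : Type*} [NormedAddCommGroup E]
    {f : ℝ → E} {a b : ℝ} (hab : a ≤ b) (hf : ContinuousOn f (Ioo a b)) :
    AEStronglyMeasurable f (volume.restrict (Ι a b)) := by
  rw [uIoc_of_le hab, ← Measure.restrict_congr_set Ioo_ae_eq_Ioc]
  exact hf.aestronglyMeasurable measurableSet_Ioo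

theorem continuousOn_one_sub_rpow_neg (β : ℝ) :
    ContinuousOn (fun v : ℝ => (1 - v) ^ (-β)) (Ioo 0 1) :=
  (continuousOn_const.sub continuousOn_id).rpow_const fun _ hv => Or.inl (sub_pos.2 hv.2).ne'

theorem intervalIntegrable_one_sub_rpow_neg {β : ℝ} (hβ : β < 1) :
    IntervalIntegrable (fun v : ℝ => (1 - v) ^ (-β)) volume 0 1 := by
  simpa using (intervalIntegrable_rpow' (r := -β) (a := 1) (b := 0) (by linarith)).comp_sub_left 1

theorem intervalIntegrable_one_sub_rpow_neg_mul {f : ℝ → ℝ} {β Y : ℝ} (hβ : β < 1)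
    (hf : ContinuousOn f (Ioo 0 1)) (hfY : ∀ v ∈ Ioo (0 : ℝ) 1, |f v| ≤ Y) :
    IntervalIntegrable (fun v => (1 - v) ^ (-β) * f v) volume 0 1 := by
  refine ((intervalIntegrable_one_sub_rpow_neg hβ).mul_const Y).mono_fun
    (((continuousOn_one_sub_rpow_neg β).mul hf).aestronglyMeasurable_uIoc_of_Ioo zero_le_one) ?_
  filter_upwards [ae_restrict_uIoc_mem_Ioo zero_le_one] with v hv
  have hpow : 0 ≤ (1 - v) ^ (-β) := rpow_nonneg (sub_pos.2 hv.2).le _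
  have hY : 0 ≤ Y := (abs_nonneg _).trans (hfY v hv)
  rw [norm_mul, Real.norm_of_nonneg hpow, Real.norm_of_nonneg (mul_nonneg hpow hY)]
  exact mul_le_mul_of_nonneg_left (hfY v hv) hpow

theorem integral_sub_rpow_mul_eq (y : ℝ → ℝ) (β : ℝ) {a s : ℝ} (has : a < s) :
    ∫ τ in a..s, (s - τ) ^ (-β) * y τ =
      (s - a) ^ (1 - β) * ∫ v in (0 : ℝ)..1, (1 - v) ^ (-β) * y (a + (s - a) * v) := by
  have hsa : 0 < s - a := sub_pos.2 has
  have hsub := smul_integral_comp_add_mul (fun τ => (s - τ) ^ (-β) * y τ) (a := 0) (b := 1)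
    (s - a) a
  rw [mul_zero, add_zero, mul_one, add_sub_cancel] at hsub
  rw [← hsub, smul_eq_mul, sub_eq_add_neg 1 β, rpow_add hsa, rpow_one, mul_assoc]
  congr 1
  rw [← intervalIntegral.integral_const_mul]
  refine intervalIntegral.integral_congr fun (v : ℝ) hv => ?_
  have hv1 : 0 ≤ 1 - v := by
    rw [uIcc_of_le zero_le_one] at hv
    linarith [hv.2]
  rw [show s - (a + (s - a) * v) = (s - a) * (1 - v) by ring, mul_rpow hsa.le hv1, mul_assoc]

theorem add_sub_mul_mem_Ioo {a s v : ℝ} (has : a < s) (hv : v ∈ Ioo (0 : ℝ) 1) :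
    a + (s - a) * v ∈ Ioo a s :=
  ⟨by nlinarith [hv.1], by nlinarith [hv.2]⟩

theorem ContinuousOn.comp_add_sub_mul {E : Type*} [TopologicalSpace E] {g : ℝ → E}
    {a b s : ℝ} (hg : ContinuousOn g (Icc a b)) (has : a < s) (hsb : s ≤ b) :
    ContinuousOn (fun v => g (a + (s - a) * v)) (Ioo 0 1) :=
  hg.comp (by fun_prop) fun _ hv =>
    Ioo_subset_Icc_self (Ioo_subset_Ioo_right hsb (add_sub_mul_mem_Ioo has hv))

theorem hasFDerivAt_one_sub_rpow_mul_comp {y : ℝ → ℝ} {y' a v : ℝ} {p : ℝ × ℝ} (hv : v < 1)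
    (hy : HasDerivAt y y' (a + (p.2 - a) * v)) :
    HasFDerivAt (fun q : ℝ × ℝ => (1 - v) ^ (-q.1) * y (a + (q.2 - a) * v))
      ((1 - v) ^ (-p.1) • ((-log (1 - v) * y (a + (p.2 - a) * v)) • ContinuousLinearMap.fst ℝ ℝ ℝ
        + (y' * v) • ContinuousLinearMap.snd ℝ ℝ ℝ)) p := by
  have hpow : HasFDerivAt (fun q : ℝ × ℝ => (1 - v) ^ (-q.1))
      ((-p.1 * (1 - v) ^ (-p.1 - 1)) • (0 : ℝ × ℝ →L[ℝ] ℝ) +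
        ((1 - v) ^ (-p.1) * log (1 - v)) • -ContinuousLinearMap.fst ℝ ℝ ℝ) p :=
    (hasFDerivAt_const _ p).rpow hasFDerivAt_fst.neg (sub_pos.2 hv)
  have hcomp : HasFDerivAt (fun q : ℝ × ℝ => y (a + (q.2 - a) * v))
      (y' • v • ContinuousLinearMap.snd ℝ ℝ ℝ) p :=
    hy.comp_hasFDerivAt p (((hasFDerivAt_snd.sub_const a).mul_const v).const_add a)
  refine (hpow.mul hcomp).congr_fderiv (ContinuousLinearMap.ext fun q => ?_)
  simp only [add_apply, smul_apply, ContinuousLinearMap.coe_fst', ContinuousLinearMap.coe_snd',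
    neg_apply, zero_apply, smul_eq_mul]
  ring

theorem differentiableAt_integral_one_sub_rpow_mul_comp {y : ℝ → ℝ} {a b β₀ t : ℝ}
    (hy : ContDiffOn ℝ 1 y (Icc a b)) (hβ₀ : β₀ < 1) (ht : t ∈ Ioo a b) :
    DifferentiableAt ℝ
      (fun p : ℝ × ℝ => ∫ v in (0 : ℝ)..1, (1 - v) ^ (-p.1) * y (a + (p.2 - a) * v)) (β₀, t) := by
  have hab : a < b := ht.1.trans ht.2
  set δ := (1 - β₀) / 3 with hδ
  have hδ0 : 0 < δ := by rw [hδ]; linarith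
  set y' := derivWithin y (Icc a b)
  have hy'_cont : ContinuousOn y' (Icc a b) :=
    hy.continuousOn_derivWithin (uniqueDiffOn_Icc hab) le_rfl
  obtain ⟨Y, hY⟩ := isCompact_Icc.exists_bound_of_continuousOn hy.continuousOn
  obtain ⟨Y', hY'⟩ := isCompact_Icc.exists_bound_of_continuousOn hy'_cont
  have hy' : ∀ z ∈ Ioo a b, HasDerivAt y (y' z) z := fun z hz =>
    (hy.differentiableOn one_ne_zero z (Ioo_subset_Icc_self hz)).hasDerivWithinAt.hasDerivAt
      (Icc_mem_nhds hz.1 hz.2)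
  have hmem : ∀ s ∈ Ioo a b, ∀ v ∈ Ioo (0 : ℝ) 1, a + (s - a) * v ∈ Ioo a b := fun s hs v hv =>
    Ioo_subset_Ioo_right hs.2.le (add_sub_mul_mem_Ioo hs.1 hv)
  have hN : Iio (β₀ + δ) ×ˢ Ioo a b ∈ nhds (β₀, t) :=
    prod_mem_nhds (Iio_mem_nhds (by linarith)) (Ioo_mem_nhds ht.1 ht.2)
  have h_bound : ∀ᵐ v ∂volume.restrict (Ι 0 1), ∀ p ∈ Iio (β₀ + δ) ×ˢ Ioo a b,
      ‖(1 - v) ^ (-p.1) • ((-log (1 - v) * y (a + (p.2 - a) * v)) • ContinuousLinearMap.fst ℝ ℝ ℝ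
        + (y' (a + (p.2 - a) * v) * v) • ContinuousLinearMap.snd ℝ ℝ ℝ)‖ ≤
        (Y / δ + Y') * (1 - v) ^ (-(1 - δ)) := by
    filter_upwards [ae_restrict_uIoc_mem_Ioo zero_le_one] with v hv p ⟨hp1, hp2⟩
    have hz := Ioo_subset_Icc_self (hmem p.2 hp2 v hv)
    have hy'z : |y' (a + (p.2 - a) * v) * v| ≤ Y' := by
      rw [abs_mul, abs_of_pos hv.1]
      exact (mul_le_of_le_one_right (abs_nonneg _) hv.2.le).trans (hY' _ hz)
    exact norm_rpow_neg_smul_fst_add_snd_le (sub_pos.2 hv.2) (by linarith [hv.1]) hδ0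
      (by rw [mem_Iio] at hp1; linarith) (hY _ hz) hy'z
  refine (hasFDerivAt_integral_of_dominated_of_fderiv_le'' hN ?_
    (intervalIntegrable_one_sub_rpow_neg_mul hβ₀ (hy.continuousOn.comp_add_sub_mul ht.1 ht.2.le)
      fun v hv => hY _ (Ioo_subset_Icc_self (hmem t ht v hv))) ?_ h_bound
    ((intervalIntegrable_one_sub_rpow_neg (by linarith)).const_mul _) ?_).differentiableAt
  · filter_upwards [hN] with p hp
    exact ((continuousOn_one_sub_rpow_neg p.1).mul (hy.continuousOn.comp_add_sub_mul hp.2.1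
      hp.2.2.le)).aestronglyMeasurable_uIoc_of_Ioo zero_le_one
  · have hlog_cont : ContinuousOn (fun v : ℝ => log (1 - v)) (Ioo 0 1) :=
      (continuousOn_const.sub continuousOn_id).log fun v hv => (sub_pos.2 hv.2).ne'
    exact ((continuousOn_one_sub_rpow_neg β₀).smul
      (((hlog_cont.neg.mul (hy.continuousOn.comp_add_sub_mul ht.1 ht.2.le)).smul
        continuousOn_const).add (((hy'_cont.comp_add_sub_mul ht.1 ht.2.le).mul
          continuousOn_id).smul continuousOn_const))).aestronglyMeasurable_uIoc_of_Ioo zero_le_one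
  · filter_upwards [ae_restrict_uIoc_mem_Ioo zero_le_one] with v hv p ⟨_, hp2⟩
    exact hasFDerivAt_one_sub_rpow_mul_comp hv.2 (hy' _ (hmem p.2 hp2 v hv))

theorem differentiableAt_integral_sub_rpow_mul {y α : ℝ → ℝ} {a b t : ℝ}
    (hy : ContDiffOn ℝ 1 y (Icc a b)) (hα : DifferentiableAt ℝ α t) (hαt : α t < 1)
    (ht : t ∈ Ioo a b) :
    DifferentiableAt ℝ (fun s => ∫ τ in a..s, (s - τ) ^ (-(α s)) * y τ) t := by
  have hK : DifferentiableAt ℝ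
      (fun s => ∫ v in (0 : ℝ)..1, (1 - v) ^ (-(α s)) * y (a + (s - a) * v)) t :=
    (differentiableAt_integral_one_sub_rpow_mul_comp hy hαt ht).comp (f := fun s => (α s, s)) t
      (hα.prodMk differentiableAt_id)
  have hpow : DifferentiableAt ℝ (fun s => (s - a) ^ (1 - α s)) t :=
    (differentiableAt_id.sub_const a).rpow ((differentiableAt_const 1).sub hα)
      (sub_pos.2 ht.1).ne'
  refine (hpow.mul hK).congr_of_eventuallyEq ?_
  filter_upwards [Ioi_mem_nhds ht.1] with s hs
  exact integral_sub_rpow_mul_eq y (α s) hs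

theorem caputo_typeI_eq_typeII_sub_correction_general
    (a b : ℝ) (x α : ℝ → ℝ)
    (hx : ContDiffOn ℝ 1 x (Set.Icc a b))
    (hα : DifferentiableOn ℝ α (Set.Icc a b))
    (hα01 : ∀ s ∈ Set.Icc a b, α s ∈ Set.Ioo (0 : ℝ) 1)
    (t : ℝ) (ht : t ∈ Set.Ioo a b) :
    (1 / Real.Gamma (1 - α t)) *
        deriv (fun s => ∫ τ in a..s, (s - τ) ^ (-(α s)) * (x τ - x a)) t =
      deriv (fun s => (1 / Real.Gamma (1 - α s)) *
          ∫ τ in a..s, (s - τ) ^ (-(α s)) * (x τ - x a)) t -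
        (deriv α t * psi (1 - α t) / Real.Gamma (1 - α t)) *
          ∫ τ in a..t, (t - τ) ^ (-(α t)) * (x τ - x a) := by
  have htIcc : t ∈ Icc a b := Ioo_subset_Icc_self ht
  have hα1 : α t < 1 := (hα01 t htIcc).2
  have hαt : HasDerivAt α (deriv α t) t :=
    ((hα t htIcc).differentiableAt (Icc_mem_nhds ht.1 ht.2)).hasDerivAt
  have hΓ : HasDerivAt (fun s => 1 / Gamma (1 - α s))
      (deriv α t * psi (1 - α t) / Gamma (1 - α t)) t := by
    have h := (hαt.const_sub 1).one_div_Gamma fun m hm => by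
      linarith [(Nat.cast_nonneg m : (0 : ℝ) ≤ m)]
    rwa [neg_neg] at h
  have hI := differentiableAt_integral_sub_rpow_mul (hx.sub (contDiffOn_const (c := x a)))
    hαt.differentiableAt hα1 ht
  rw [(hΓ.fun_mul hI.hasDerivAt).deriv]
  ring

/-- Type I left Caputo derivative of variable order equals the type II derivative
minus a correction term involving α' and the digamma function. -/
theorem caputo_typeI_eq_typeII_sub_correction
    (a b : ℝ) (hab : a < b) (x α : ℝ → ℝ)
    (hx : ContDiffOn ℝ 1 x (Set.Icc a b))
    (hα : DifferentiableOn ℝ α (Set.Icc a b))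
    (hα01 : ∀ s ∈ Set.Icc a b, α s ∈ Set.Ioo (0 : ℝ) 1)
    (t : ℝ) (ht : t ∈ Set.Ioo a b) :
    (1 / Real.Gamma (1 - α t)) *
        deriv (fun s => ∫ τ in a..s, (s - τ) ^ (-(α s)) * (x τ - x a)) t =
      deriv (fun s => (1 / Real.Gamma (1 - α s)) *
          ∫ τ in a..s, (s - τ) ^ (-(α s)) * (x τ - x a)) t -
        (deriv α t * psi (1 - α t) / Real.Gamma (1 - α t)) *
          ∫ τ in a..t, (t - τ) ^ (-(α t)) * (x τ - x a) :=
  caputo_typeI_eq_typeII_sub_correction_general a b x α hx hα hα01 t ht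
end

section
/- If x ∈ C¹([a,b],ℝ) and α : [a,b] → (0,1), then the type III left Caputo derivative of x vanishes at t = a, i.e., lim_{t→a⁺} (1/Γ(1-α(t))) ∫_a^t (t-τ)^{-α(t)} x'(τ) dτ = 0. -/
/-!
The kernel `(t - τ) ^ (-α(t))` is integrable because `α(t) < 1`, and its integral over `[a, t]`
is `(t - a) ^ (1 - α(t)) / (1 - α(t))`. Since `x'` is bounded near `a`, the integral is at most
a constant times this quantity, which tends to `0 ^ (1 - α(a)) / (1 - α(a)) = 0` by continuity
of `α` and `α(a) < 1`; the factor `1 / Γ(1 - α(t))` stays bounded because `Γ` is continuous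
and positive at `1 - α(a) > 0`.
-/

open Real intervalIntegral Set Filter Topology

lemma intervalIntegrable_sub_rpow_neg {a t β : ℝ} (hβ : β < 1) :
    IntervalIntegrable (fun τ => (t - τ) ^ (-β)) MeasureTheory.volume a t := by
  simpa using ((intervalIntegrable_rpow' (r := -β) (a := 0) (b := t - a)
    (by linarith)).comp_sub_left t).symm

lemma integral_sub_rpow_neg {a t β : ℝ} (hβ : β < 1) :
    ∫ τ in a..t, (t - τ) ^ (-β) = (t - a) ^ (1 - β) / (1 - β) := by
  rw [integral_comp_sub_left (fun u => u ^ (-β)) t, sub_self,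
    integral_rpow (Or.inl (by linarith)), zero_rpow (by linarith)]
  ring_nf

lemma norm_integral_sub_rpow_neg_smul_le {E : Type*} [NormedAddCommGroup E] [NormedSpace ℝ E]
    {f : ℝ → E} {a t β M : ℝ} (hat : a ≤ t) (hβ : β < 1) (hf : ∀ τ ∈ Ioc a t, ‖f τ‖ ≤ M) :
    ‖∫ τ in a..t, (t - τ) ^ (-β) • f τ‖ ≤ M * ((t - a) ^ (1 - β) / (1 - β)) := by
  have hbound : ∀ τ ∈ Ioc a t, ‖(t - τ) ^ (-β) • f τ‖ ≤ M * (t - τ) ^ (-β) := fun τ hτ => by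
    have hτt : 0 ≤ t - τ := sub_nonneg.2 hτ.2
    rw [norm_smul, norm_rpow_of_nonneg hτt, Real.norm_of_nonneg hτt, mul_comm]
    exact mul_le_mul_of_nonneg_right (hf τ hτ) (rpow_nonneg hτt _)
  calc ‖∫ τ in a..t, (t - τ) ^ (-β) • f τ‖
      ≤ ∫ τ in a..t, M * (t - τ) ^ (-β) :=
        norm_integral_le_of_norm_le hat (.of_forall hbound)
          ((intervalIntegrable_sub_rpow_neg hβ).const_mul M)
    _ = M * ((t - a) ^ (1 - β) / (1 - β)) := by
        rw [integral_const_mul, integral_sub_rpow_neg hβ]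

lemma tendsto_sub_rpow_one_sub_div_nhdsGT {β : ℝ → ℝ} {a β₀ : ℝ}
    (hβ : Tendsto β (𝓝[>] a) (𝓝 β₀)) (hβ₀ : β₀ < 1) :
    Tendsto (fun t => (t - a) ^ (1 - β t) / (1 - β t)) (𝓝[>] a) (𝓝 0) := by
  have hsub : Tendsto (fun t => t - a) (𝓝[>] a) (𝓝 0) := by
    simpa using ((continuous_sub_right a).tendsto a).mono_left nhdsWithin_le_nhds
  have hexp : Tendsto (fun t => 1 - β t) (𝓝[>] a) (𝓝 (1 - β₀)) := hβ.const_sub 1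
  have h := (hsub.rpow hexp (Or.inr (sub_pos.2 hβ₀))).div hexp (sub_pos.2 hβ₀).ne'
  rwa [zero_rpow (sub_pos.2 hβ₀).ne', zero_div] at h

lemma ContDiffOn.exists_bound_deriv_Ioo {E : Type*} [NormedAddCommGroup E] [NormedSpace ℝ E]
    {x : ℝ → E} {a b : ℝ} (hab : a < b) (hx : ContDiffOn ℝ 1 x (Icc a b)) :
    ∃ M, ∀ τ ∈ Ioo a b, ‖deriv x τ‖ ≤ M := by
  obtain ⟨M, hM⟩ := isCompact_Icc.exists_bound_of_continuousOn
    (hx.continuousOn_derivWithin (uniqueDiffOn_Icc hab) le_rfl)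
  refine ⟨M, fun τ hτ => ?_⟩
  rw [← derivWithin_of_mem_nhds (Icc_mem_nhds hτ.1 hτ.2)]
  exact hM τ (Ioo_subset_Icc_self hτ)

lemma Real.continuousAt_Gamma_of_pos {s : ℝ} (hs : 0 < s) : ContinuousAt Gamma s :=
  (differentiableAt_Gamma fun m hm => by linarith [(Nat.cast_nonneg m : (0 : ℝ) ≤ m)]).continuousAt

/-- The type III left Caputo derivative of variable order vanishes at the initial point:
its limit as t → a⁺ is 0. -/
theorem caputo_typeIII_tendsto_zero_at_initial_point
    (a b : ℝ) (hab : a < b) (x α : ℝ → ℝ)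
    (hx : ContDiffOn ℝ 1 x (Set.Icc a b))
    (hα : ContinuousOn α (Set.Icc a b))
    (hα01 : ∀ s ∈ Set.Icc a b, α s ∈ Set.Ioo (0 : ℝ) 1) :
    Filter.Tendsto
      (fun t => (1 / Real.Gamma (1 - α t)) *
        ∫ τ in a..t, (t - τ) ^ (-(α t)) * deriv x τ)
      (nhdsWithin a (Set.Ioi a)) (nhds 0) := by
  have ha : a ∈ Icc a b := left_mem_Icc.2 hab.le
  have hαa_lt_one : α a < 1 := (hα01 a ha).2
  have hαt : Tendsto α (𝓝[>] a) (𝓝 (α a)) :=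
    (hα a ha).mono_of_mem_nhdsWithin (Icc_mem_nhdsGT hab)
  have hcoef : Tendsto (fun t => 1 / Gamma (1 - α t)) (𝓝[>] a) (𝓝 (1 / Gamma (1 - α a))) :=
    tendsto_const_nhds.div
      ((continuousAt_Gamma_of_pos (sub_pos.2 hαa_lt_one)).tendsto.comp (hαt.const_sub 1))
      (Gamma_pos_of_pos (sub_pos.2 hαa_lt_one)).ne'
  obtain ⟨M, hM⟩ := hx.exists_bound_deriv_Ioo hab
  have hint : Tendsto (fun t => ∫ τ in a..t, (t - τ) ^ (-(α t)) * deriv x τ) (𝓝[>] a) (𝓝 0) := by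
    refine squeeze_zero_norm' ?_ (by
      simpa using (tendsto_sub_rpow_one_sub_div_nhdsGT hαt hαa_lt_one).const_mul M)
    filter_upwards [Ioo_mem_nhdsGT hab, hαt (Iio_mem_nhds hαa_lt_one)] with t ht hαt_lt_one
    exact norm_integral_sub_rpow_neg_smul_le ht.1.le hαt_lt_one
      fun τ hτ => hM τ ⟨hτ.1, hτ.2.trans_lt ht.2⟩
  simpa using hcoef.mul hint
end

section
/- For x(t) = (t-a)^γ with γ > 0 and differentiable α : (a,b) → (0,1), the type II left Caputo derivative satisfies ᶜₐ𝒟_t^{α(t)} x(t) = (Γ(γ+1)/Γ(γ-α(t)+1)) (t-a)^{γ-α(t)} − α'(t) (Γ(γ+1)/Γ(γ-α(t)+2)) (t-a)^{γ-α(t)+1} [ln(t-a) − Ψ(γ-α(t)+2)]. -/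
/-!
Substituting `τ = a + (s - a) x` turns the Caputo integral of `(τ - a)^γ` into a Beta integral, so
for each `s` the bracketed function equals `Γ(γ + 1) (s - a)^δ / Γ(δ + 1)` with `δ = γ + 1 - α(s)`.
Differentiating this closed form, the variable exponent contributes `δ' (s - a)^δ log (s - a)`
and the Gamma function in the denominator contributes `-δ' ψ(δ + 1)` through `Γ' = Γ ψ`.
-/

open Real intervalIntegral Set

theorem integral_rpow_mul_sub_rpow {u v c : ℝ} (hu : 0 < u) (hv : 0 < v) (hc : 0 < c) :
    ∫ x in 0..c, x ^ (u - 1) * (c - x) ^ (v - 1) =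
      Gamma u * Gamma v / Gamma (u + v) * c ^ (u + v - 1) := by
  have hcomplex := Complex.betaIntegral_scaled u v hc
  rw [Complex.betaIntegral_eq_Gamma_mul_div _ _ (by simpa) (by simpa)] at hcomplex
  apply Complex.ofReal_injective
  rw [← intervalIntegral.integral_ofReal]
  refine (intervalIntegral.integral_congr fun x hx => ?_).trans hcomplex |>.trans ?_
  · rw [uIcc_of_le hc.le] at hx
    push_cast
    rw [Complex.ofReal_cpow hx.1, Complex.ofReal_cpow (sub_nonneg.2 hx.2)]
    push_cast; rfl
  · rw [← Complex.ofReal_add, Complex.Gamma_ofReal, Complex.Gamma_ofReal, Complex.Gamma_ofReal]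
    push_cast
    rw [Complex.ofReal_cpow hc.le]
    push_cast; ring

theorem integral_sub_rpow_mul_sub_rpow {a s p q : ℝ} (has : a < s) (hp : -1 < p) (hq : -1 < q) :
    ∫ τ in a..s, (s - τ) ^ p * (τ - a) ^ q =
      Gamma (p + 1) * Gamma (q + 1) / Gamma (p + q + 2) * (s - a) ^ (p + q + 1) := by
  have hshift := intervalIntegral.integral_comp_sub_right
    (fun x => x ^ (q + 1 - 1) * (s - a - x) ^ (p + 1 - 1)) (a := a) (b := s) a
  simp only [sub_self, sub_sub_sub_cancel_right] at hshift
  rw [integral_rpow_mul_sub_rpow (by linarith) (by linarith) (sub_pos.2 has)] at hshift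
  simp only [add_sub_cancel_right] at hshift
  rw [show p + q + 2 = (q + 1) + (p + 1) by ring, show p + q + 1 = (q + 1) + (p + 1) - 1 by ring,
    mul_comm (Gamma (p + 1)), ← hshift]
  exact intervalIntegral.integral_congr fun x _ => mul_comm _ _

theorem hasDerivAt_Gamma_mul_psi {z : ℝ} (hz : ∀ m : ℕ, z ≠ -m) :
    HasDerivAt Gamma (Gamma z * psi z) z := by
  have hΓ := (differentiableAt_Gamma hz).hasDerivAt
  have hpsi : psi z = deriv Gamma z / Gamma z := ((hΓ.log (Gamma_ne_zero hz)).deriv :)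
  rwa [hpsi, mul_div_cancel₀ _ (Gamma_ne_zero hz)]

theorem hasDerivAt_sub_rpow_div_Gamma_add_one {δ : ℝ → ℝ} {δ' a t : ℝ} (hδ : HasDerivAt δ δ' t)
    (hδt : ∀ m : ℕ, δ t ≠ -m) (hat : a < t) :
    HasDerivAt (fun s => (s - a) ^ δ s / Gamma (δ s + 1))
      ((t - a) ^ (δ t - 1) / Gamma (δ t) +
        δ' * ((t - a) ^ δ t / Gamma (δ t + 1)) * (log (t - a) - psi (δ t + 1))) t := by
  have hδ0 : δ t ≠ 0 := by simpa using hδt 0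
  have hδ1 : ∀ m : ℕ, δ t + 1 ≠ -m := fun m h => hδt (m + 1) (by push_cast; linarith)
  have hpow : HasDerivAt (fun s => (s - a) ^ δ s)
      (1 * δ t * (t - a) ^ (δ t - 1) + δ' * (t - a) ^ δ t * log (t - a)) t :=
    ((hasDerivAt_id t).sub_const a).rpow hδ (sub_pos.2 hat)
  have hΓ : HasDerivAt (fun s => Gamma (δ s + 1)) (Gamma (δ t + 1) * psi (δ t + 1) * δ') t :=
    (hasDerivAt_Gamma_mul_psi hδ1).comp t (hδ.add_const 1) (h₂ := Gamma)
  refine (hpow.div hΓ (Gamma_ne_zero hδ1)).congr_deriv ?_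
  rw [Gamma_add_one hδ0]
  have := Gamma_ne_zero hδt
  field_simp
  ring

theorem caputo_typeII_power_general
    (a b : ℝ) (γ : ℝ) (hγ : 0 < γ) (α : ℝ → ℝ)
    (hα : DifferentiableOn ℝ α (Set.Ioo a b))
    (hα01 : ∀ s ∈ Set.Ioo a b, α s ∈ Set.Ioo (0 : ℝ) 1)
    (t : ℝ) (ht : t ∈ Set.Ioo a b) :
    deriv (fun s => (1 / Real.Gamma (1 - α s)) *
        ∫ τ in a..s, (s - τ) ^ (-(α s)) * (τ - a) ^ γ) t =
      (Real.Gamma (γ + 1) / Real.Gamma (γ - α t + 1)) * (t - a) ^ (γ - α t) -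
        deriv α t * (Real.Gamma (γ + 1) / Real.Gamma (γ - α t + 2)) *
          (t - a) ^ (γ - α t + 1) *
          (Real.log (t - a) - psi (γ - α t + 2)) := by
  have hnhds : Ioo a b ∈ nhds t := isOpen_Ioo.mem_nhds ht
  have hclosed : (fun s => (1 / Gamma (1 - α s)) * ∫ τ in a..s, (s - τ) ^ (-(α s)) * (τ - a) ^ γ)
      =ᶠ[nhds t] fun s => Gamma (γ + 1) * ((s - a) ^ (γ + 1 - α s) / Gamma (γ + 1 - α s + 1)) := by
    filter_upwards [hnhds] with s hs
    have hΓ : Gamma (1 - α s) ≠ 0 := (Gamma_pos_of_pos (by linarith [(hα01 s hs).2])).ne'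
    rw [integral_sub_rpow_mul_sub_rpow hs.1 (by linarith [(hα01 s hs).2]) (by linarith)]
    field_simp
    ring_nf
  have hδ : HasDerivAt (fun s => γ + 1 - α s) (-deriv α t) t :=
    (hα.differentiableAt hnhds).hasDerivAt.const_sub (γ + 1)
  have hδt : ∀ m : ℕ, γ + 1 - α t ≠ -m := fun m h => by
    linarith [(hα01 t ht).2, (Nat.cast_nonneg m : (0 : ℝ) ≤ m)]
  rw [hclosed.deriv_eq, ((hasDerivAt_sub_rpow_div_Gamma_add_one hδ hδt ht.1).const_mul _).deriv,
    show γ + 1 - α t + 1 = γ - α t + 2 by ring, show γ + 1 - α t - 1 = γ - α t by ring,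
    show γ + 1 - α t = γ - α t + 1 by ring]
  ring

/-- Type II left Caputo derivative of variable order of the power function (t-a)^γ. -/
theorem caputo_typeII_power
    (a b : ℝ) (hab : a < b) (γ : ℝ) (hγ : 0 < γ) (α : ℝ → ℝ)
    (hα : DifferentiableOn ℝ α (Set.Ioo a b))
    (hα01 : ∀ s ∈ Set.Ioo a b, α s ∈ Set.Ioo (0 : ℝ) 1)
    (t : ℝ) (ht : t ∈ Set.Ioo a b) :
    deriv (fun s => (1 / Real.Gamma (1 - α s)) *
        ∫ τ in a..s, (s - τ) ^ (-(α s)) * (τ - a) ^ γ) t =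
      (Real.Gamma (γ + 1) / Real.Gamma (γ - α t + 1)) * (t - a) ^ (γ - α t) -
        deriv α t * (Real.Gamma (γ + 1) / Real.Gamma (γ - α t + 2)) *
          (t - a) ^ (γ - α t + 1) *
          (Real.log (t - a) - psi (γ - α t + 2)) :=
  caputo_typeII_power_general a b γ hγ α hα hα01 t ht
end

section
/- For x(t) = (b-t)^γ with γ > 0 and differentiable α : (a,b) → (0,1), the type III right Caputo derivative satisfies ᶜ_t𝔻_b^{α(t)} x(t) = (Γ(γ+1)/Γ(γ-α(t)+1)) (b-t)^{γ-α(t)}. -/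
open Real intervalIntegral Set

lemma real_beta_scaled (p q c : ℝ) (hp : 0 < p) (hq : 0 < q) (hc : 0 < c) :
    ∫ x in (0:ℝ)..c, x ^ (p - 1) * (c - x) ^ (q - 1) =
      c ^ (p + q - 1) * (Real.Gamma p * Real.Gamma q / Real.Gamma (p + q)) := by
  have hpq : (0:ℝ) < p + q := by linarith
  have hGpq : Real.Gamma (p + q) ≠ 0 := (Real.Gamma_pos_of_pos hpq).ne'
  apply Complex.ofReal_injective
  have h1 : ((∫ x in (0:ℝ)..c, x ^ (p - 1) * (c - x) ^ (q - 1) : ℝ) : ℂ) =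
      ∫ x in (0:ℝ)..c, (x : ℂ) ^ ((p : ℂ) - 1) * ((c : ℂ) - x) ^ ((q : ℂ) - 1) := by
    rw [← intervalIntegral.integral_ofReal]
    refine intervalIntegral.integral_congr fun x hx => ?_
    rw [Set.uIcc_of_le hc.le] at hx
    rw [Complex.ofReal_mul, Complex.ofReal_cpow hx.1, Complex.ofReal_cpow (by linarith [hx.2] : (0:ℝ) ≤ c - x)]
    push_cast
    ring
  rw [h1, Complex.betaIntegral_scaled (p : ℂ) (q : ℂ) hc]
  have hG : Complex.Gamma ((p : ℂ) + q) ≠ 0 := by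
    rw [show ((p:ℂ) + q) = ((p + q : ℝ) : ℂ) by push_cast; ring, Complex.Gamma_ofReal]
    exact_mod_cast hGpq
  have hbeta : Complex.betaIntegral (p : ℂ) (q : ℂ) =
      Complex.Gamma p * Complex.Gamma q / Complex.Gamma ((p : ℂ) + q) := by
    have h := Complex.Gamma_mul_Gamma_eq_betaIntegral
      (s := (p : ℂ)) (t := (q : ℂ)) (by simpa using hp) (by simpa using hq)
    rw [eq_div_iff hG, mul_comm, ← h]
  rw [hbeta]
  rw [show ((p:ℂ) + q - 1) = ((p + q - 1 : ℝ) : ℂ) by push_cast; ring,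
    show ((p:ℂ) + q) = ((p + q : ℝ) : ℂ) by push_cast; ring,
    ← Complex.ofReal_cpow hc.le, Complex.Gamma_ofReal, Complex.Gamma_ofReal,
    Complex.Gamma_ofReal]
  push_cast
  ring

/-- Type III right Caputo derivative of variable order of the power function (b-t)^γ. -/
theorem caputo_typeIII_right_power
    (a b : ℝ) (hab : a < b) (γ : ℝ) (hγ : 0 < γ) (α : ℝ → ℝ)
    (hα : DifferentiableOn ℝ α (Set.Ioo a b))
    (hα01 : ∀ s ∈ Set.Ioo a b, α s ∈ Set.Ioo (0 : ℝ) 1)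
    (t : ℝ) (ht : t ∈ Set.Ioo a b) :
    (-1 / Real.Gamma (1 - α t)) *
        (∫ τ in t..b, (τ - t) ^ (-(α t)) * deriv (fun s => (b - s) ^ γ) τ) =
      (Real.Gamma (γ + 1) / Real.Gamma (γ - α t + 1)) * (b - t) ^ (γ - α t) := by
  obtain ⟨hta, htb⟩ := ht
  obtain ⟨hA0, hA1⟩ := hα01 t ⟨hta, htb⟩
  set A := α t with hAdef
  have hbt : 0 < b - t := by linarith
  have hcongr : (∫ τ in t..b, (τ - t) ^ (-A) * deriv (fun s => (b - s) ^ γ) τ) =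
      ∫ τ in t..b, (-γ) * ((τ - t) ^ ((1 - A) - 1) * ((b - t) - (τ - t)) ^ (γ - 1)) := by
    apply intervalIntegral.integral_congr_ae
    have hb : ∀ᵐ (τ : ℝ), τ ≠ b := by
      rw [MeasureTheory.ae_iff]
      simpa using MeasureTheory.measure_singleton (μ := MeasureTheory.volume) b
    filter_upwards [hb] with τ hτb hmem
    rw [Set.uIoc_of_le (by linarith)] at hmem
    have hτb' : τ < b := lt_of_le_of_ne hmem.2 hτb
    have hbτ : (0:ℝ) < b - τ := by linarith
    have hd : HasDerivAt (fun s : ℝ => (b - s) ^ γ) (γ * (b - τ) ^ (γ - 1) * (-1)) τ := by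
      have h1 : HasDerivAt (fun s : ℝ => b - s) (-1) τ := by
        simpa using (hasDerivAt_id τ).const_sub b
      exact (Real.hasDerivAt_rpow_const (Or.inl hbτ.ne')).comp τ h1
    rw [hd.deriv, show (1 - A) - 1 = -A by ring, show (b - t) - (τ - t) = b - τ by ring]
    ring
  rw [hcongr, intervalIntegral.integral_const_mul]
  have htrans : (∫ τ in t..b, (τ - t) ^ ((1 - A) - 1) * ((b - t) - (τ - t)) ^ (γ - 1))
      = ∫ u in (0:ℝ)..(b - t), u ^ ((1 - A) - 1) * ((b - t) - u) ^ (γ - 1) := by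
    rw [intervalIntegral.integral_comp_sub_right
      (fun u => u ^ ((1 - A) - 1) * ((b - t) - u) ^ (γ - 1)) t]
    norm_num
  rw [htrans, real_beta_scaled (1 - A) γ (b - t) (by linarith) hγ hbt]
  have hG1A : Real.Gamma (1 - A) ≠ 0 := (Real.Gamma_pos_of_pos (by linarith)).ne'
  have hGden : Real.Gamma (γ - A + 1) ≠ 0 := (Real.Gamma_pos_of_pos (by linarith)).ne'
  rw [show (1 - A) + γ - 1 = γ - A by ring, show (1 - A) + γ = γ - A + 1 by ring,
    Real.Gamma_add_one hγ.ne']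
  field_simp
end

section
/- For 0 < α < 1, n ∈ ℕ with n ≥ 1, and N ≥ n, the binomial tail satisfies Σ_{p=N+1}^∞ |binom(n-α, p)| s^p ≤ exp((n-α)² + (n-α)) / (N^{n-α} (n-α)) for all s ∈ [0,1], using the bound |binom(n-α, p)| ≤ exp((n-α)² + n-α)/p^{n+1-α}. -/
open Real Set

noncomputable def gbinom (z : ℝ) (p : ℕ) : ℝ :=
  Real.Gamma (z + 1) / (Real.Gamma ((p : ℝ) + 1) * Real.Gamma (z - (p : ℝ) + 1))

lemma gbinom_not_int {α : ℝ} (n p : ℕ) (hα0 : 0 < α) (hα1 : α < 1) (m : ℕ) :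
    ((n:ℝ) - α) - p ≠ -m := by
  intro h
  rcases le_or_gt (n + m) p with h' | h'
  · have : (n:ℝ) + m ≤ p := by exact_mod_cast h'
    linarith
  · have : (p:ℝ) + 1 ≤ (n:ℝ) + m := by exact_mod_cast h'
    linarith

lemma gbinom_succ {α : ℝ} (n : ℕ) (hα0 : 0 < α) (hα1 : α < 1) (p : ℕ) :
    gbinom ((n:ℝ) - α) (p+1) = gbinom ((n:ℝ) - α) p * (((n:ℝ) - α) - p) / ((p:ℝ)+1) := by
  set z := (n:ℝ) - α with hz
  have hzp : z - p ≠ 0 := by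
    have := gbinom_not_int n p hα0 hα1 0
    simpa using this
  have hQ : Real.Gamma (z - p) ≠ 0 :=
    Real.Gamma_ne_zero (fun m => gbinom_not_int n p hα0 hα1 m)
  have hP : Real.Gamma ((p:ℝ) + 1) ≠ 0 :=
    (Real.Gamma_pos_of_pos (by positivity)).ne'
  have e1 : Real.Gamma (((p+1:ℕ):ℝ) + 1) = ((p:ℝ)+1) * Real.Gamma ((p:ℝ)+1) := by
    push_cast
    rw [Real.Gamma_add_one (by positivity)]
  have e2 : z - ((p+1:ℕ):ℝ) + 1 = z - p := by push_cast; ring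
  have e3 : Real.Gamma (z - (p:ℝ) + 1) = (z - p) * Real.Gamma (z - p) :=
    Real.Gamma_add_one hzp
  unfold gbinom
  rw [e1, e2, e3]
  field_simp

lemma keyineq (n : ℕ) (hn : 1 ≤ n) {α : ℝ} (hα0 : 0 < α) (hα1 : α < 1) :
    ((n:ℝ) + 1 - α) * Real.log ((n:ℝ)+2) ≤
      Real.log 4 + Real.log ((n:ℝ)+1) + ((n:ℝ)-α) * ((n:ℝ)+1-α) := by
  have l4 : Real.log 4 = 2 * Real.log 2 := by
    rw [show (4:ℝ) = 2^2 by norm_num, Real.log_pow]; push_cast; ring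
  rcases eq_or_lt_of_le hn with h1 | hn2
  · -- n = 1
    have hn1 : n = 1 := h1.symm
    subst hn1
    have l3 : Real.log 3 ≤ 2 * Real.log 2 := by
      calc Real.log 3 ≤ Real.log 4 := Real.log_le_log (by norm_num) (by norm_num)
      _ = 2 * Real.log 2 := l4
    have l3pos : 0 < Real.log 3 := Real.log_pos (by norm_num)
    have l2lt := Real.log_two_lt_d9
    have l2gt := Real.log_two_gt_d9
    push_cast
    rw [l4]
    norm_num
    nlinarith [mul_le_mul_of_nonneg_left l3 (show (0:ℝ) ≤ 2 - α by linarith),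
      sq_nonneg (α - 0.8), hα0.le, hα1.le]
  · -- 2 ≤ n
    have hn2' : 2 ≤ n := hn2
    have hn2R : (2:ℝ) ≤ (n:ℝ) := by exact_mod_cast hn2'
    have hlogpos : 0 < Real.log ((n:ℝ)+1) := Real.log_pos (by linarith)
    have h1 : Real.log ((n:ℝ)+2) ≤ Real.log ((n:ℝ)+1) + 1/((n:ℝ)+1) := by
      have h := Real.log_le_sub_one_of_pos (show 0 < ((n:ℝ)+2)/((n:ℝ)+1) by positivity)
      rw [Real.log_div (by positivity) (by positivity)] at h
      have h2 : ((n:ℝ)+2)/((n:ℝ)+1) - 1 = 1/((n:ℝ)+1) := by field_simp; norm_num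
      linarith
    have h2 : (n:ℝ) * Real.log ((n:ℝ)+1) ≤ (n:ℝ)*((n:ℝ)-1) + (Real.log 4 - 1) := by
      rcases eq_or_lt_of_le hn2' with h3 | hn3
      · have : n = 2 := h3.symm
        subst this
        have hl32 : Real.log 3 - Real.log 2 ≤ 1/2 := by
          have h := Real.log_le_sub_one_of_pos (show 0 < (3:ℝ)/2 by norm_num)
          rw [Real.log_div (by norm_num) (by norm_num)] at h
          linarith
        push_cast
        rw [l4]
        norm_num
        nlinarith [hl32]
      · have hn3' : 3 ≤ n := hn3
        have hn3R : (3:ℝ) ≤ (n:ℝ) := by exact_mod_cast hn3'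
        have he : (2.7:ℝ) < Real.exp 1 := by
          have := Real.exp_one_gt_d9; linarith
        have e1 : (n:ℝ) - 1 ≤ Real.exp ((n:ℝ)-2) := by
          have := Real.add_one_le_exp ((n:ℝ)-2); linarith
        have e2 : Real.exp ((n:ℝ)-1) = Real.exp ((n:ℝ)-2) * Real.exp 1 := by
          rw [← Real.exp_add]; ring_nf
        have e3 : (n:ℝ) + 1 ≤ Real.exp ((n:ℝ)-1) := by
          rw [e2]
          nlinarith [Real.exp_pos ((n:ℝ)-2)]
        have e4 : Real.log ((n:ℝ)+1) ≤ (n:ℝ) - 1 := by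
          rw [Real.log_le_iff_le_exp (by linarith)]
          exact e3
        have hl4 : (1:ℝ) < Real.log 4 := by
          rw [l4]; nlinarith [Real.log_two_gt_d9]
        nlinarith [e4]
    -- combine
    have hc1 : ((n:ℝ)+1-α) * Real.log ((n:ℝ)+2) ≤ ((n:ℝ)+1-α) * (Real.log ((n:ℝ)+1) + 1/((n:ℝ)+1)) :=
      mul_le_mul_of_nonneg_left h1 (by linarith)
    have hc2 : ((n:ℝ)+1-α) * (1/((n:ℝ)+1)) ≤ 1 := by
      rw [mul_one_div, div_le_one (by linarith)]
      linarith
    have hc3 : (0:ℝ) ≤ α * Real.log ((n:ℝ)+1) := mul_nonneg hα0.le hlogpos.le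
    have hc4 : (n:ℝ)*((n:ℝ)-1) ≤ ((n:ℝ)-α)*((n:ℝ)+1-α) := by nlinarith
    nlinarith [hc1, hc2, hc3, hc4, h2]

set_option maxHeartbeats 1600000 in
/-- Tail estimate for the generalized binomial series. -/
theorem binomial_tail_bound
    (n N : ℕ) (hn : 1 ≤ n) (hN : n ≤ N) (α : ℝ) (hα0 : 0 < α) (hα1 : α < 1)
    (s : ℝ) (hs0 : 0 ≤ s) (hs1 : s ≤ 1) :
    (∑' p : ℕ, |gbinom ((n : ℝ) - α) (p + N + 1)| * s ^ (p + N + 1)) ≤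
      Real.exp (((n : ℝ) - α) ^ 2 + ((n : ℝ) - α)) /
        ((N : ℝ) ^ ((n : ℝ) - α) * ((n : ℝ) - α)) := by
  have hn1 : (1:ℝ) ≤ (n:ℝ) := by exact_mod_cast hn
  have hNn : (n:ℝ) ≤ (N:ℝ) := by exact_mod_cast hN
  have hN1 : (1:ℝ) ≤ (N:ℝ) := le_trans hn1 hNn
  set z : ℝ := (n:ℝ) - α with hzdef
  have hz0 : 0 < z := by rw [hzdef]; linarith
  set a : ℕ → ℝ := fun p => |gbinom z p| with hadef
  have ha0 : ∀ p, 0 ≤ a p := fun p => abs_nonneg _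
  have harec : ∀ p : ℕ, a (p+1) = a p * |z - p| / ((p:ℝ)+1) := by
    intro p
    show |gbinom z (p+1)| = |gbinom z p| * |z - p| / ((p:ℝ)+1)
    rw [hzdef, gbinom_succ n hα0 hα1 p, abs_div, abs_mul,
      abs_of_pos (show (0:ℝ) < (p:ℝ)+1 by positivity)]
  have hΓ : Real.Gamma (z+1) ≠ 0 := (Real.Gamma_pos_of_pos (by linarith)).ne'
  have ha00 : a 0 = 1 := by
    show |gbinom z 0| = 1
    simp [gbinom, Real.Gamma_one, div_self hΓ]
  -- bound by binomial coefficients below n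
  have hchoose : ∀ k, k < n → a k ≤ (n.choose k : ℝ) := by
    intro k
    induction k with
    | zero => intro _; simp [ha00]
    | succ k ih =>
      intro hk
      have hk' : k < n := Nat.lt_of_succ_lt hk
      have h1 : a k ≤ (n.choose k : ℝ) := ih hk'
      have hkn : (k:ℝ) + 1 ≤ (n:ℝ) := by exact_mod_cast hk'
      have hzk : (0:ℝ) ≤ z - k := by rw [hzdef]; linarith
      have habs : |z - (k:ℝ)| = z - k := abs_of_nonneg hzk
      have hc : (n.choose (k+1) : ℝ) * ((k:ℝ)+1) = (n.choose k : ℝ) * ((n:ℝ) - (k:ℝ)) := by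
        have h := Nat.choose_succ_right_eq n k
        have h2 : ((n.choose (k+1) * (k+1) : ℕ) : ℝ) = ((n.choose k * (n - k) : ℕ) : ℝ) := by
          exact_mod_cast congrArg (fun x : ℕ => (x:ℝ)) h
        push_cast [Nat.cast_sub hk'.le] at h2
        linarith
      rw [harec k, habs, div_le_iff₀ (by positivity : (0:ℝ) < (k:ℝ)+1)]
      have hzk2 : z - k ≤ (n:ℝ) - k := by rw [hzdef]; linarith
      nlinarith [mul_le_mul h1 hzk2 hzk (Nat.cast_nonneg (n.choose k))]
  -- a n ≤ 1 - α
  have han : a n ≤ 1 - α := by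
    obtain ⟨m, hm⟩ : ∃ m, n = m + 1 := ⟨n - 1, by omega⟩
    have h1 : a m ≤ (n.choose m : ℝ) := hchoose m (by omega)
    have hcm : (n.choose m : ℝ) = (m:ℝ) + 1 := by
      rw [hm, Nat.choose_succ_self_right]; push_cast; ring
    have hnm : (n:ℝ) = (m:ℝ) + 1 := by rw [hm]; push_cast; ring
    have hzm : |z - (m:ℝ)| = 1 - α := by
      rw [show z - (m:ℝ) = 1 - α by rw [hzdef]; linarith]
      exact abs_of_nonneg (by linarith)
    rw [hm]
    rw [harec m, hzm, div_le_iff₀ (by positivity : (0:ℝ) < (m:ℝ)+1)]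
    nlinarith [ha0 m, h1, hcm]
  -- a (n+1) ≤ α(1-α)/(n+1)
  have han1 : a (n+1) ≤ α * (1-α) / ((n:ℝ)+1) := by
    have habsn : |z - (n:ℝ)| = α := by
      rw [show z - (n:ℝ) = -α by rw [hzdef]; ring, abs_neg, abs_of_pos hα0]
    rw [harec n, habsn, div_le_div_iff₀ (by positivity) (by positivity)]
    nlinarith [ha0 n, mul_le_mul_of_nonneg_right
      (mul_le_mul_of_nonneg_right han hα0.le) (show (0:ℝ) ≤ (n:ℝ)+1 by positivity)]
  -- decay induction
  have hdecay : ∀ m, n+1 ≤ m → a m ≤ a (n+1) * (((n:ℝ)+2)/((m:ℝ)+1)) ^ (z+1) := by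
    intro m hm
    induction m, hm using Nat.le_induction with
    | base =>
      have h : ((n:ℝ)+2)/(((n+1:ℕ):ℝ)+1) = 1 := by
        rw [div_eq_one_iff_eq (by push_cast; positivity)]
        push_cast; ring
      rw [h, Real.one_rpow, mul_one]
    | succ m hm ih =>
      have hmn : (n:ℝ) + 1 ≤ (m:ℝ) := by exact_mod_cast hm
      have hmz : z + 1 ≤ (m:ℝ) := by rw [hzdef]; linarith
      have habsm : |z - (m:ℝ)| = (m:ℝ) - z := by
        rw [abs_sub_comm]; exact abs_of_nonneg (by linarith)
      have hstep : ((m:ℝ) - z)/((m:ℝ)+1) ≤ (((m:ℝ)+1)/((m:ℝ)+2)) ^ (z+1) := by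
        have hp : (0:ℝ) < ((m:ℝ)+1)/((m:ℝ)+2) := by positivity
        rw [Real.rpow_def_of_pos hp]
        have hlog : -(1/((m:ℝ)+1)) ≤ Real.log (((m:ℝ)+1)/((m:ℝ)+2)) := by
          have h2 := Real.log_le_sub_one_of_pos (show (0:ℝ) < ((m:ℝ)+2)/((m:ℝ)+1) by positivity)
          rw [Real.log_div (by positivity) (by positivity)] at h2
          rw [Real.log_div (by positivity) (by positivity)]
          have h3 : ((m:ℝ)+2)/((m:ℝ)+1) - 1 = 1/((m:ℝ)+1) := by field_simp; norm_num
          linarith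
        have h3 : -((z+1)/((m:ℝ)+1)) ≤ Real.log (((m:ℝ)+1)/((m:ℝ)+2)) * (z+1) := by
          have h4 := mul_le_mul_of_nonneg_right hlog (show (0:ℝ) ≤ z+1 by linarith)
          calc -((z+1)/((m:ℝ)+1)) = -(1/((m:ℝ)+1)) * (z+1) := by ring
          _ ≤ _ := h4
        calc ((m:ℝ)-z)/((m:ℝ)+1) = -((z+1)/((m:ℝ)+1)) + 1 := by field_simp; ring
        _ ≤ Real.exp (-((z+1)/((m:ℝ)+1))) := Real.add_one_le_exp _
        _ ≤ Real.exp (Real.log (((m:ℝ)+1)/((m:ℝ)+2)) * (z+1)) := Real.exp_le_exp.mpr h3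
      have hcomb : (((n:ℝ)+2)/((m:ℝ)+1))^(z+1) * ((((m:ℝ)+1))/((m:ℝ)+2))^(z+1)
          = (((n:ℝ)+2)/((m:ℝ)+2))^(z+1) := by
        rw [← Real.mul_rpow (by positivity) (by positivity)]
        congr 1
        field_simp
      have hcast : ((m:ℝ)+1) = (((m+1:ℕ):ℝ)) := by push_cast; ring
      rw [harec m, habsm, mul_div_assoc]
      calc a m * (((m:ℝ) - z)/((m:ℝ)+1))
          ≤ (a (n+1) * (((n:ℝ)+2)/((m:ℝ)+1)) ^ (z+1)) * ((((m:ℝ)+1))/((m:ℝ)+2))^(z+1) := by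
            apply mul_le_mul ih hstep (div_nonneg (by linarith) (by positivity)) (by positivity)
        _ = a (n+1) * ((((n:ℝ)+2)/((m:ℝ)+2))^(z+1)) := by rw [mul_assoc, hcomb]
        _ = a (n+1) * (((n:ℝ)+2)/(((m+1:ℕ):ℝ)+1))^(z+1) := by push_cast; ring_nf
  -- telescoping
  have hb : ∀ p, n ≤ p → a (p+1) * ((p:ℝ)+1) = a p * (p:ℝ) - z * a p := by
    intro p hp
    have hzp : z ≤ (p:ℝ) := by
      have : (n:ℝ) ≤ (p:ℝ) := by exact_mod_cast hp
      rw [hzdef]; linarith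
    have habs : |z - (p:ℝ)| = (p:ℝ) - z := by
      rw [abs_sub_comm]; exact abs_of_nonneg (by linarith)
    rw [harec p, habs, div_mul_cancel₀ _ (by positivity : ((p:ℝ)+1) ≠ 0)]
    ring
  have hsum_eq : ∀ m : ℕ, z * ∑ i ∈ Finset.range m, a (i+N+1)
      = a (N+1) * ((N:ℝ)+1) - a (m+N+1) * ((m:ℝ)+(N:ℝ)+1) := by
    intro m
    induction m with
    | zero => simp
    | succ m ih =>
      rw [Finset.sum_range_succ, mul_add, ih]
      have h := hb (m+N+1) (by omega)
      have hc : ((m+N+1:ℕ):ℝ) = (m:ℝ)+(N:ℝ)+1 := by push_cast; ring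
      rw [hc] at h
      have hc2 : (m+N+1)+1 = (m+1)+N+1 := by omega
      rw [hc2] at h
      push_cast
      linarith [h]
  -- partial sums bounded
  have hBN : a (N+1) * ((N:ℝ)+1) ≤ Real.exp (z^2+z) / (N:ℝ)^z := by
    have hNz : (0:ℝ) < (N:ℝ)^z := Real.rpow_pos_of_pos (by linarith) z
    have hd := hdecay (N+1) (by omega)
    have hcN : (((N+1:ℕ):ℝ))+1 = (N:ℝ)+2 := by push_cast; ring
    rw [hcN] at hd
    have hP1 : ((N:ℝ)^z) * ((N:ℝ)+1) ≤ ((N:ℝ)+2)^(z+1) := by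
      have h1 : (N:ℝ)^z ≤ ((N:ℝ)+2)^z := Real.rpow_le_rpow (by linarith) (by linarith) hz0.le
      have h2 : ((N:ℝ)+2)^(z+1) = ((N:ℝ)+2)^z * ((N:ℝ)+2) := by
        rw [Real.rpow_add (by linarith), Real.rpow_one]
      nlinarith [Real.rpow_pos_of_pos (show (0:ℝ) < (N:ℝ)+2 by linarith) z, h1, hNz]
    have hP2 : a (n+1) * ((n:ℝ)+2)^(z+1) ≤ Real.exp (z^2+z) := by
      have hk := keyineq n hn hα0 hα1
      have e1 : ((n:ℝ)+2)^(z+1) = Real.exp (Real.log ((n:ℝ)+2) * (z+1)) :=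
        Real.rpow_def_of_pos (by linarith) _
      have e2 : Real.log ((n:ℝ)+2) * (z+1) ≤ Real.log 4 + Real.log ((n:ℝ)+1) + (z^2+z) := by
        have hz1 : z + 1 = (n:ℝ)+1-α := by rw [hzdef]; ring
        have hzz : z^2 + z = ((n:ℝ)-α) * ((n:ℝ)+1-α) := by rw [hzdef]; ring
        rw [hz1, hzz]
        linarith [hk]
      have e3 : ((n:ℝ)+2)^(z+1) ≤ 4 * ((n:ℝ)+1) * Real.exp (z^2+z) := by
        rw [e1]
        calc Real.exp (Real.log ((n:ℝ)+2) * (z+1))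
            ≤ Real.exp (Real.log 4 + Real.log ((n:ℝ)+1) + (z^2+z)) := Real.exp_le_exp.mpr e2
        _ = 4 * ((n:ℝ)+1) * Real.exp (z^2+z) := by
            rw [Real.exp_add, Real.exp_add, Real.exp_log (by norm_num : (0:ℝ) < 4),
              Real.exp_log (by linarith : (0:ℝ) < (n:ℝ)+1)]
      have e4 : a (n+1) ≤ 1/(4*((n:ℝ)+1)) := by
        have hq : α * (1-α) ≤ 1/4 := by nlinarith [sq_nonneg (α - 1/2)]
        calc a (n+1) ≤ α*(1-α)/((n:ℝ)+1) := han1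
        _ ≤ (1/4)/((n:ℝ)+1) := by gcongr
        _ = 1/(4*((n:ℝ)+1)) := by field_simp
      have e5 := mul_le_mul e4 e3 (by positivity) (by positivity)
      have hsimp : 1/(4*((n:ℝ)+1)) * (4*((n:ℝ)+1)*Real.exp (z^2+z)) = Real.exp (z^2+z) := by
        field_simp
      linarith [e5, hsimp.le, hsimp.ge]
    have hsplit : (((n:ℝ)+2)/((N:ℝ)+2))^(z+1) = ((n:ℝ)+2)^(z+1) / ((N:ℝ)+2)^(z+1) :=
      Real.div_rpow (by linarith) (by linarith) _
    have hNP2 : (0:ℝ) < ((N:ℝ)+2)^(z+1) := Real.rpow_pos_of_pos (by linarith) _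
    have hfrac : ((N:ℝ)+1)/((N:ℝ)+2)^(z+1) ≤ 1/(N:ℝ)^z := by
      rw [div_le_div_iff₀ hNP2 hNz]
      nlinarith [hP1]
    calc a (N+1) * ((N:ℝ)+1)
        ≤ (a (n+1) * (((n:ℝ)+2)/((N:ℝ)+2))^(z+1)) * ((N:ℝ)+1) :=
          mul_le_mul_of_nonneg_right hd (by linarith)
      _ = (a (n+1) * ((n:ℝ)+2)^(z+1)) * (((N:ℝ)+1)/((N:ℝ)+2)^(z+1)) := by
          rw [hsplit]; ring
      _ ≤ Real.exp (z^2+z) * (1/(N:ℝ)^z) :=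
          mul_le_mul hP2 hfrac (by positivity) (Real.exp_pos _).le
      _ = Real.exp (z^2+z) / (N:ℝ)^z := by ring
  -- conclude
  have hNz : (0:ℝ) < (N:ℝ)^z := Real.rpow_pos_of_pos (by linarith) z
  apply Real.tsum_le_of_sum_range_le
    (fun p => mul_nonneg (ha0 (p+N+1)) (pow_nonneg hs0 _))
  intro m
  have h1 : ∑ i ∈ Finset.range m, a (i+N+1) * s^(i+N+1) ≤ ∑ i ∈ Finset.range m, a (i+N+1) :=
    Finset.sum_le_sum (fun i _ => by
      calc a (i+N+1) * s^(i+N+1) ≤ a (i+N+1) * 1 :=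
        mul_le_mul_of_nonneg_left (pow_le_one₀ hs0 hs1) (ha0 _)
      _ = a (i+N+1) := mul_one _)
  have h2 : z * ∑ i ∈ Finset.range m, a (i+N+1) ≤ a (N+1) * ((N:ℝ)+1) := by
    rw [hsum_eq m]
    nlinarith [ha0 (m+N+1), mul_nonneg (ha0 (m+N+1)) (show (0:ℝ) ≤ (m:ℝ)+(N:ℝ)+1 by positivity)]
  have h3 : ∑ i ∈ Finset.range m, a (i+N+1) ≤ Real.exp (z^2+z) / ((N:ℝ)^z * z) := by
    rw [le_div_iff₀ (by positivity)]
    calc (∑ i ∈ Finset.range m, a (i+N+1)) * ((N:ℝ)^z * z)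
        = (z * ∑ i ∈ Finset.range m, a (i+N+1)) * (N:ℝ)^z := by ring
      _ ≤ (a (N+1) * ((N:ℝ)+1)) * (N:ℝ)^z := by
          apply mul_le_mul_of_nonneg_right h2 hNz.le
      _ ≤ (Real.exp (z^2+z) / (N:ℝ)^z) * (N:ℝ)^z := mul_le_mul_of_nonneg_right hBN hNz.le
      _ = Real.exp (z^2+z) := by field_simp
  exact le_trans h1 h3
end
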